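/- Let G* be the graph on {1,...,5} with edges {{1,2},{1,3},{1,4},{1,5},{2,3},{2,4},{3,5},{4,5}} and let p : {1,...,5} → ℝ² be given by p₁ = (0,2), p₂ = (-1/4,1/2), p₃ = (21/20,9/10), p₄ = (-1,0), p₅ = (1,0). Then the framework G*(p) is not globally rigid in ℝ²: there exists a configuration q : {1,...,5} → ℝ² such that |pᵢ - pⱼ| = |qᵢ - qⱼ| for every edge {i,j}, but |p₂ - p₅| ≠ |q₂ - q₅|. -/

import Mathlib

noncomputable def pt (a b : ℝ) : EuclideanSpace ℝ (Fin 2) := WithLp.toLp 2 ![a, b]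

/-- Edges of G* (0-based: vertex `i : Fin 5` is vertex `i+1` of `{1,...,5}`). -/
def Estar : Set (Fin 5 × Fin 5) :=
  {(0,1), (0,2), (0,3), (0,4), (1,2), (1,3), (2,4), (3,4)}

noncomputable def pstar : Fin 5 → EuclideanSpace ℝ (Fin 2) :=
  ![pt 0 2, pt (-1/4) (1/2), pt (21/20) (9/10), pt (-1) 0, pt 1 0]

/-! Keep `p₁, p₂, p₄`, reflect `p₃` in the line `p₁p₂` and `p₅` in the line `p₁p₄`. Every edge
other than `{3,5}` joins two kept vertices or a reflected vertex to a point of its mirror, so its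
length is preserved; for `{3,5}` this particular `p` is chosen so that the length survives as
well. Meanwhile `|p₂ - p₅|² = 29/16` whereas `|q₂ - q₅|² = 401/80`. -/

lemma dist_pt (a b c d : ℝ) :
    dist (pt a b) (pt c d) = √((a - c) ^ 2 + (b - d) ^ 2) := by
  simp [pt, EuclideanSpace.dist_eq, Fin.sum_univ_two, Real.dist_eq, sq_abs]

lemma dist_pt_eq_dist_pt_iff {a b c d a' b' c' d' : ℝ} :
    dist (pt a b) (pt c d) = dist (pt a' b') (pt c' d') ↔
      (a - c) ^ 2 + (b - d) ^ 2 = (a' - c') ^ 2 + (b' - d') ^ 2 := by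
  simp only [dist_pt]
  exact Real.sqrt_inj (by positivity) (by positivity)

noncomputable def qstar : Fin 5 → EuclideanSpace ℝ (Fin 2) :=
  ![pt 0 2, pt (-1/4) (1/2), pt (-27/20) (13/10), pt (-1) 0, pt (-11/5) (8/5)]

lemma dist_pstar_eq_dist_qstar {e : Fin 5 × Fin 5} (he : e ∈ Estar) :
    dist (pstar e.1) (pstar e.2) = dist (qstar e.1) (qstar e.2) := by
  simp only [Estar, Set.mem_insert_iff, Set.mem_singleton_iff] at he
  rcases he with rfl | rfl | rfl | rfl | rfl | rfl | rfl | rfl <;>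
    simp only [pstar, qstar, Matrix.cons_val] <;>
    norm_num [dist_pt_eq_dist_pt_iff]

lemma dist_pstar_ne_dist_qstar : dist (pstar 1) (pstar 4) ≠ dist (qstar 1) (qstar 4) := by
  simp only [pstar, qstar, Matrix.cons_val]
  norm_num [dist_pt_eq_dist_pt_iff]

/-- G*(p) is not globally rigid: there is an equivalent configuration q with
|p₂ - p₅| ≠ |q₂ - q₅|. -/
theorem stmt_6 :
    ∃ q : Fin 5 → EuclideanSpace ℝ (Fin 2),
      (∀ e ∈ Estar, dist (pstar e.1) (pstar e.2) = dist (q e.1) (q e.2)) ∧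
      dist (pstar 1) (pstar 4) ≠ dist (q 1) (q 4) :=
  ⟨qstar, fun _ he => dist_pstar_eq_dist_qstar he, dist_pstar_ne_dist_qstar⟩
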